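/- For each a ∈ {1, 2, 3}, H decomposes as the orthogonal direct sum H = H_a(1) ⊕ H_a(−1), and dim H_a(1) = dim H_a(−1); in particular dim H is even. -/

import Mathlib

open RealInnerProductSpace

/-- An almost contact metric structure `(φ, ξ, η)` together with an almost contact metric
3-structure `(φ_a, ξ_a, η_a)`, `a ∈ {1,2,3}` (indices mod 3), on a real inner product space `V`,
modelling the structures induced on the tangent space of a real hypersurface in the complex
two-plane Grassmannian `G₂(ℂ^{m+2})` by the Kaehler structure `J` and the quaternionic Kaehler
structure `𝔍`.  Here `η(X) = ⟪ξ, X⟫` and `η_a(X) = ⟪ξ_a, X⟫` are written out via the inner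
product. -/
structure ACMS3 (V : Type*) [NormedAddCommGroup V] [InnerProductSpace ℝ V] where
  phi : V →ₗ[ℝ] V
  xi : V
  phiA : Fin 3 → V →ₗ[ℝ] V
  xiA : Fin 3 → V
  xi_unit : ‖xi‖ = 1
  phi_sq : ∀ X : V, phi (phi X) = -X + ⟪xi, X⟫ • xi
  phi_xi : phi xi = 0
  phi_metric : ∀ X Y : V, ⟪phi X, phi Y⟫ = ⟪X, Y⟫ - ⟪xi, X⟫ * ⟪xi, Y⟫
  xiA_unit : ∀ a, ‖xiA a‖ = 1
  phiA_sq : ∀ a (X : V), phiA a (phiA a X) = -X + ⟪xiA a, X⟫ • xiA a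
  phiA_xiA : ∀ a, phiA a (xiA a) = 0
  phiA_metric : ∀ a (X Y : V),
    ⟪phiA a X, phiA a Y⟫ = ⟪X, Y⟫ - ⟪xiA a, X⟫ * ⟪xiA a, Y⟫
  quat1 : ∀ a (X : V), phiA a (phiA (a + 1) X) - ⟪xiA (a + 1), X⟫ • xiA a = phiA (a + 2) X
  quat2 : ∀ a (X : V),
    phiA (a + 2) X = -(phiA (a + 1) (phiA a X)) + ⟪xiA a, X⟫ • xiA (a + 1)
  quat_xi1 : ∀ a, phiA a (xiA (a + 1)) = xiA (a + 2)
  quat_xi2 : ∀ a, xiA (a + 2) = -(phiA (a + 1) (xiA a))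
  rel : ∀ a (X : V), phiA a (phi X) - ⟪xi, X⟫ • xiA a = phi (phiA a X) - ⟪xiA a, X⟫ • xi
  rel_xi : ∀ a, phi (xiA a) = phiA a xi

variable {V : Type*} [NormedAddCommGroup V] [InnerProductSpace ℝ V]

/-- The endomorphism `θ_a X := φ_a φ X − η(X) ξ_a`. -/
noncomputable def ACMS3.theta (S : ACMS3 V) (a : Fin 3) : V →ₗ[ℝ] V where
  toFun X := S.phiA a (S.phi X) - ⟪S.xi, X⟫ • S.xiA a
  map_add' X Y := by
    simp only [map_add, inner_add_right, add_smul]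
    abel
  map_smul' r X := by
    simp only [map_smul, inner_smul_right, RingHom.id_apply, smul_sub, smul_smul]

/-- `H^⊥ = span{ξ, ξ₁, ξ₂, ξ₃, φξ₁, φξ₂, φξ₃}`. -/
noncomputable def ACMS3.Hperp (S : ACMS3 V) : Submodule ℝ V :=
  Submodule.span ℝ {S.xi, S.xiA 0, S.xiA 1, S.xiA 2,
    S.phi (S.xiA 0), S.phi (S.xiA 1), S.phi (S.xiA 2)}

/-- `H` is the orthogonal complement of `H^⊥` in `V`. -/
noncomputable def ACMS3.H (S : ACMS3 V) : Submodule ℝ V := S.Hperpᗮ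

/-- `H_a(ε)`, the eigenspace of `θ_a` restricted to `H` corresponding to the eigenvalue `ε`. -/
noncomputable def ACMS3.eigenH (S : ACMS3 V) (a : Fin 3) (ε : ℝ) : Submodule ℝ V :=
  S.H ⊓ Module.End.eigenspace (S.theta a) ε

/-- The normal Jacobi operator
`R̂_N X = X + 3η(X)ξ + Σ_a (3η_a(X)ξ_a − η(ξ_a)θ_a X + η_a(φX)φξ_a)`. -/
noncomputable def ACMS3.jacobi (S : ACMS3 V) (X : V) : V :=
  X + (3 * ⟪S.xi, X⟫) • S.xi +
    ∑ a : Fin 3, ((3 * ⟪S.xiA a, X⟫) • S.xiA a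
      - ⟪S.xi, S.xiA a⟫ • S.theta a X
      + ⟪S.xiA a, S.phi X⟫ • S.phi (S.xiA a))

/-! `H^⊥` is invariant under the skew maps `φ` and `φ_a`, hence so is `H`. On `H` the maps `φ`
and `φ_a` commute and square to `-1`, so `θ_a = φ_a φ` is a self-adjoint involution of `H`, and
`H` is the orthogonal sum of its `±1`-eigenspaces. By the quaternionic relations `φ_{a+1}`
anticommutes with `θ_a` on `H`, and it is injective there, so it embeds each eigenspace into the
other. -/

theorem Submodule.inf_eigenspace_one_sup_inf_eigenspace_neg_one {K : Type*} [Field K]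
    [NeZero (2 : K)] {M : Type*} [AddCommGroup M] [Module K M] {N : Submodule K M}
    {T : Module.End K M} (hN : ∀ x ∈ N, T x ∈ N) (hT : ∀ x ∈ N, T (T x) = x) :
    N ⊓ T.eigenspace 1 ⊔ N ⊓ T.eigenspace (-1) = N := by
  refine le_antisymm (sup_le inf_le_left inf_le_left) fun x hx => ?_
  have hTx := hN x hx
  refine Submodule.mem_sup.mpr
    ⟨(2⁻¹ : K) • (x + T x), ?_, (2⁻¹ : K) • (x - T x), ?_, ?_⟩
  · refine Submodule.smul_mem _ _
      (Submodule.mem_inf.mpr ⟨add_mem hx hTx, Module.End.mem_eigenspace_iff.mpr ?_⟩)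
    rw [map_add, hT x hx, one_smul, add_comm]
  · refine Submodule.smul_mem _ _
      (Submodule.mem_inf.mpr ⟨sub_mem hx hTx, Module.End.mem_eigenspace_iff.mpr ?_⟩)
    rw [map_sub, hT x hx, neg_one_smul, neg_sub]
  · rw [← smul_add, add_add_sub_cancel, ← two_smul K x, smul_smul,
      inv_mul_cancel₀ two_ne_zero, one_smul]

theorem inner_eq_zero_of_mem_eigenspace {T : Module.End ℝ V} {μ ν : ℝ} (hμν : μ ≠ ν) {x y : V}
    (hx : x ∈ T.eigenspace μ) (hy : y ∈ T.eigenspace ν) (hT : ⟪T x, y⟫ = ⟪x, T y⟫) :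
    ⟪x, y⟫ = 0 := by
  rw [Module.End.mem_eigenspace_iff.mp hx, Module.End.mem_eigenspace_iff.mp hy,
    real_inner_smul_left, real_inner_smul_right] at hT
  have h : (μ - ν) * ⟪x, y⟫ = 0 := by rw [sub_mul, hT, sub_self]
  exact (mul_eq_zero.mp h).resolve_left (sub_ne_zero.mpr hμν)

theorem Submodule.finrank_le_finrank_of_mapsTo {K : Type*} [DivisionRing K] {M : Type*}
    [AddCommGroup M] [Module K M] {f : M →ₗ[K] M} {P Q : Submodule K M} [FiniteDimensional K Q]
    (hf : ∀ x ∈ P, f x ∈ Q) (hinj : ∀ x ∈ P, f x = 0 → x = 0) :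
    Module.finrank K P ≤ Module.finrank K Q := by
  refine LinearMap.finrank_le_finrank_of_injective (f := f.restrict hf) ?_
  rw [injective_iff_map_eq_zero]
  exact fun x hx => Subtype.ext (hinj x x.2 (congrArg Subtype.val hx))

theorem Submodule.apply_mem_orthogonal_of_skew {f : V →ₗ[ℝ] V}
    (hf : ∀ X Y, ⟪f X, Y⟫ = -⟪X, f Y⟫) {N : Submodule ℝ V} (hN : ∀ u ∈ N, f u ∈ N) {X : V}
    (hX : X ∈ Nᗮ) : f X ∈ Nᗮ := by
  refine (Submodule.mem_orthogonal _ _).mpr fun u hu => ?_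
  rw [← neg_eq_zero, ← hf, (Submodule.mem_orthogonal _ _).mp hX _ (hN u hu)]

structure IsAlmostContactMetric (f : V →ₗ[ℝ] V) (ξ : V) : Prop where
  norm_eq_one : ‖ξ‖ = 1
  apply_apply : ∀ X, f (f X) = -X + ⟪ξ, X⟫ • ξ
  apply_self : f ξ = 0
  inner_apply_apply : ∀ X Y, ⟪f X, f Y⟫ = ⟪X, Y⟫ - ⟪ξ, X⟫ * ⟪ξ, Y⟫

namespace IsAlmostContactMetric

variable {f : V →ₗ[ℝ] V} {ξ : V} (h : IsAlmostContactMetric f ξ)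
include h

theorem inner_apply_eq_zero (X : V) : ⟪ξ, f X⟫ = 0 := by
  have hξ : ξ ≠ 0 := ne_zero_of_norm_ne_zero (by rw [h.norm_eq_one]; exact one_ne_zero)
  -- `f³X` computed in two ways: `-f X + η(f X) ξ` and `f (-X + η(X) ξ) = -f X`
  have h3 := h.apply_apply (f X)
  have h3' := congrArg f (h.apply_apply X)
  rw [map_add, map_neg, map_smul, h.apply_self, smul_zero, add_zero] at h3'
  rw [h3', left_eq_add] at h3
  exact (smul_eq_zero.mp h3).resolve_right hξ

theorem inner_apply_left (X Y : V) : ⟪f X, Y⟫ = -⟪X, f Y⟫ := by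
  have hm := h.inner_apply_apply X (f Y)
  rw [h.apply_apply, inner_add_right, inner_neg_right, real_inner_smul_right, real_inner_comm ξ,
    h.inner_apply_eq_zero, h.inner_apply_eq_zero] at hm
  linarith

theorem apply_apply_of_inner_eq_zero {X : V} (hX : ⟪ξ, X⟫ = 0) : f (f X) = -X := by
  rw [h.apply_apply, hX, zero_smul, add_zero]

theorem eq_zero_of_apply_eq_zero {X : V} (hX : ⟪ξ, X⟫ = 0) (h0 : f X = 0) : X = 0 := by
  rw [← neg_eq_zero, ← h.apply_apply_of_inner_eq_zero hX, h0, map_zero]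

end IsAlmostContactMetric

namespace ACMS3

variable (S : ACMS3 V)

theorem isAlmostContactMetric : IsAlmostContactMetric S.phi S.xi :=
  ⟨S.xi_unit, S.phi_sq, S.phi_xi, S.phi_metric⟩

theorem isAlmostContactMetric_phiA (a : Fin 3) : IsAlmostContactMetric (S.phiA a) (S.xiA a) :=
  ⟨S.xiA_unit a, S.phiA_sq a, S.phiA_xiA a, S.phiA_metric a⟩

theorem phiA_xiA_add_two (a : Fin 3) : S.phiA a (S.xiA (a + 2)) = -S.xiA (a + 1) := by
  have h := S.quat_xi2 (a + 2)
  rw [show a + 2 + 2 = a + 1 by grind, show a + 2 + 1 = a by grind] at h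
  rw [h, neg_neg]

theorem xi_mem_Hperp : S.xi ∈ S.Hperp := Submodule.subset_span (by simp)

theorem xiA_mem_Hperp (b : Fin 3) : S.xiA b ∈ S.Hperp := by
  fin_cases b <;> exact Submodule.subset_span (by simp)

theorem phi_xiA_mem_Hperp (b : Fin 3) : S.phi (S.xiA b) ∈ S.Hperp := by
  fin_cases b <;> exact Submodule.subset_span (by simp)

theorem Hperp_le_comap {f : V →ₗ[ℝ] V} (hxi : f S.xi ∈ S.Hperp)
    (hxiA : ∀ b, f (S.xiA b) ∈ S.Hperp) (hphi : ∀ b, f (S.phi (S.xiA b)) ∈ S.Hperp) :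
    S.Hperp ≤ S.Hperp.comap f := by
  refine Submodule.span_le.mpr fun v hv => ?_
  simp only [Set.mem_insert_iff, Set.mem_singleton_iff] at hv
  rcases hv with rfl | rfl | rfl | rfl | rfl | rfl | rfl
  exacts [hxi, hxiA 0, hxiA 1, hxiA 2, hphi 0, hphi 1, hphi 2]

theorem phi_mem_Hperp : ∀ u ∈ S.Hperp, S.phi u ∈ S.Hperp := by
  refine S.Hperp_le_comap ?_ S.phi_xiA_mem_Hperp fun b => ?_
  · rw [S.phi_xi]; exact zero_mem _
  · rw [S.phi_sq]
    exact add_mem (neg_mem (S.xiA_mem_Hperp b)) (Submodule.smul_mem _ _ S.xi_mem_Hperp)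

theorem phiA_xiA_mem_Hperp (c b : Fin 3) : S.phiA c (S.xiA b) ∈ S.Hperp := by
  obtain rfl | rfl | rfl : b = c ∨ b = c + 1 ∨ b = c + 2 := by grind
  · rw [S.phiA_xiA]; exact zero_mem _
  · rw [S.quat_xi1]; exact S.xiA_mem_Hperp _
  · rw [S.phiA_xiA_add_two]; exact neg_mem (S.xiA_mem_Hperp _)

theorem phiA_mem_Hperp (c : Fin 3) : ∀ u ∈ S.Hperp, S.phiA c u ∈ S.Hperp := by
  refine S.Hperp_le_comap ?_ (S.phiA_xiA_mem_Hperp c) fun b => ?_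
  · rw [← S.rel_xi]; exact S.phi_xiA_mem_Hperp c
  · rw [eq_add_of_sub_eq (S.rel c (S.xiA b)), sub_add_eq_add_sub]
    exact sub_mem (add_mem (S.phi_mem_Hperp _ (S.phiA_xiA_mem_Hperp c b))
      (Submodule.smul_mem _ _ (S.xiA_mem_Hperp c))) (Submodule.smul_mem _ _ S.xi_mem_Hperp)

variable {S}

theorem inner_eq_zero_of_mem_H {u X : V} (hu : u ∈ S.Hperp) (hX : X ∈ S.H) : ⟪u, X⟫ = 0 :=
  (Submodule.mem_orthogonal _ _).mp hX u hu

theorem phi_mem_H {X : V} (hX : X ∈ S.H) : S.phi X ∈ S.H :=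
  Submodule.apply_mem_orthogonal_of_skew S.isAlmostContactMetric.inner_apply_left
    S.phi_mem_Hperp hX

theorem phiA_mem_H (c : Fin 3) {X : V} (hX : X ∈ S.H) : S.phiA c X ∈ S.H :=
  Submodule.apply_mem_orthogonal_of_skew (S.isAlmostContactMetric_phiA c).inner_apply_left
    (S.phiA_mem_Hperp c) hX

theorem phiA_phi_of_mem_H (a : Fin 3) {X : V} (hX : X ∈ S.H) :
    S.phiA a (S.phi X) = S.phi (S.phiA a X) := by
  simpa [inner_eq_zero_of_mem_H S.xi_mem_Hperp hX,
    inner_eq_zero_of_mem_H (S.xiA_mem_Hperp a) hX] using S.rel a X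

theorem theta_of_mem_H (a : Fin 3) {X : V} (hX : X ∈ S.H) :
    S.theta a X = S.phiA a (S.phi X) := by
  simp [ACMS3.theta, inner_eq_zero_of_mem_H S.xi_mem_Hperp hX]

theorem theta_mem_H (a : Fin 3) {X : V} (hX : X ∈ S.H) : S.theta a X ∈ S.H := by
  rw [theta_of_mem_H a hX]
  exact phiA_mem_H a (phi_mem_H hX)

theorem theta_theta (a : Fin 3) {X : V} (hX : X ∈ S.H) : S.theta a (S.theta a X) = X := by
  rw [theta_of_mem_H a (theta_mem_H a hX), theta_of_mem_H a hX,
    ← phiA_phi_of_mem_H a (phi_mem_H hX),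
    S.isAlmostContactMetric.apply_apply_of_inner_eq_zero (inner_eq_zero_of_mem_H S.xi_mem_Hperp hX),
    map_neg, map_neg, (S.isAlmostContactMetric_phiA a).apply_apply_of_inner_eq_zero
      (inner_eq_zero_of_mem_H (S.xiA_mem_Hperp a) hX), neg_neg]

theorem inner_theta_left (a : Fin 3) {X Y : V} (hX : X ∈ S.H) (hY : Y ∈ S.H) :
    ⟪S.theta a X, Y⟫ = ⟪X, S.theta a Y⟫ := by
  rw [theta_of_mem_H a hX, theta_of_mem_H a hY, (S.isAlmostContactMetric_phiA a).inner_apply_left,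
    S.isAlmostContactMetric.inner_apply_left, neg_neg, phiA_phi_of_mem_H a hY]

theorem theta_phiA_add_one (a : Fin 3) {X : V} (hX : X ∈ S.H) :
    S.theta a (S.phiA (a + 1) X) = -S.phiA (a + 1) (S.theta a X) := by
  have h1 := S.quat1 a (S.phi X)
  have h2 := S.quat2 a (S.phi X)
  rw [inner_eq_zero_of_mem_H (S.xiA_mem_Hperp _) (phi_mem_H hX), zero_smul, sub_zero] at h1
  rw [inner_eq_zero_of_mem_H (S.xiA_mem_Hperp _) (phi_mem_H hX), zero_smul, add_zero] at h2
  rw [theta_of_mem_H a (phiA_mem_H (a + 1) hX), theta_of_mem_H a hX,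
    ← phiA_phi_of_mem_H (a + 1) hX, h1, h2]

theorem phiA_add_one_mem_eigenH (a : Fin 3) (ε : ℝ) {X : V} (hX : X ∈ S.eigenH a ε) :
    S.phiA (a + 1) X ∈ S.eigenH a (-ε) := by
  obtain ⟨hH, he⟩ := hX
  refine ⟨phiA_mem_H (a + 1) hH, Module.End.mem_eigenspace_iff.mpr ?_⟩
  rw [theta_phiA_add_one a hH, Module.End.mem_eigenspace_iff.mp he, map_smul, neg_smul]

theorem finrank_eigenH_le_neg [FiniteDimensional ℝ V] (a : Fin 3) (ε : ℝ) :
    Module.finrank ℝ (S.eigenH a ε) ≤ Module.finrank ℝ (S.eigenH a (-ε)) :=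
  Submodule.finrank_le_finrank_of_mapsTo (fun _ => phiA_add_one_mem_eigenH a ε)
    fun _ hX => (S.isAlmostContactMetric_phiA (a + 1)).eq_zero_of_apply_eq_zero
      (inner_eq_zero_of_mem_H (S.xiA_mem_Hperp _) hX.1)

theorem finrank_eigenH_neg [FiniteDimensional ℝ V] (a : Fin 3) (ε : ℝ) :
    Module.finrank ℝ (S.eigenH a (-ε)) = Module.finrank ℝ (S.eigenH a ε) := by
  have h := finrank_eigenH_le_neg (S := S) a (-ε)
  rw [neg_neg] at h
  exact le_antisymm h (finrank_eigenH_le_neg a ε)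

end ACMS3

/-- For each `a ∈ {1,2,3}`, `H` decomposes as the orthogonal direct sum
`H = H_a(1) ⊕ H_a(−1)`, and `dim H_a(1) = dim H_a(−1)`; in particular `dim H` is even. -/
theorem eigenH_orthogonal_decomposition [FiniteDimensional ℝ V] (S : ACMS3 V) (a : Fin 3) :
    S.eigenH a 1 ⊔ S.eigenH a (-1) = S.H ∧
    (∀ x ∈ S.eigenH a 1, ∀ y ∈ S.eigenH a (-1), ⟪x, y⟫ = 0) ∧
    Module.finrank ℝ (S.eigenH a 1) = Module.finrank ℝ (S.eigenH a (-1)) ∧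
    Even (Module.finrank ℝ S.H) := by
  have hsup : S.eigenH a 1 ⊔ S.eigenH a (-1) = S.H :=
    Submodule.inf_eigenspace_one_sup_inf_eigenspace_neg_one (fun _ => ACMS3.theta_mem_H a)
      fun _ => ACMS3.theta_theta a
  have hdisj : Disjoint (S.eigenH a 1) (S.eigenH a (-1)) :=
    (Module.End.disjoint_genEigenspace (S.theta a) (by norm_num) 1 1).mono inf_le_right inf_le_right
  have hrank : Module.finrank ℝ (S.eigenH a 1) = Module.finrank ℝ (S.eigenH a (-1)) :=
    (ACMS3.finrank_eigenH_neg a 1).symm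
  refine ⟨hsup, fun x hx y hy => inner_eq_zero_of_mem_eigenspace (by norm_num) hx.2 hy.2
    (ACMS3.inner_theta_left a hx.1 hy.1), hrank, Module.finrank ℝ (S.eigenH a (-1)), ?_⟩
  have hdim := Submodule.finrank_sup_add_finrank_inf_eq (S.eigenH a 1) (S.eigenH a (-1))
  rwa [hsup, hdisj.eq_bot, finrank_bot, add_zero, hrank] at hdim
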